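/- For every rewrite rule T = (L, R, τ, σ) and every matching m : L → G with respect to T, a cloning pushout of T and m exists, i.e. the category of cloning cones over T and m has an initial object. -/

import Mathlib

/-!
Termgraphs over a signature `Ω` with arity function `ar`.
A termgraph has a type of nodes `N`; a node `n` is *labeled* when `label n = some ω`,
and then its successor string `succ n` has length `ar ω`; unlabeled nodes have an
empty successor string (the successor function is only meaningful on labeled nodes).
-/

universe u

structure TermGraph (Ω : Type u) (ar : Ω → ℕ) : Type (u + 1) where
  N : Type u
  label : N → Option Ω
  succ : N → List N
  arity_eq : ∀ n : N, (succ n).length = ((label n).map ar).getD 0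

namespace TermGraph

variable {Ω : Type u} {ar : Ω → ℕ}

/-- A graph morphism: preserves labeled nodes, labels and successors. -/
structure Hom (G H : TermGraph Ω ar) : Type u where
  toFun : G.N → H.N
  label_eq : ∀ (n : G.N) (ω : Ω), G.label n = some ω → H.label (toFun n) = some ω
  succ_eq : ∀ (n : G.N) (ω : Ω), G.label n = some ω →
    H.succ (toFun n) = (G.succ n).map toFun

/-- `γ` is graphic at `n`: either `n` is unlabeled, or both `n` and `γ n` are labeled
with the same label and corresponding successors. -/
def GraphicAt (G H : TermGraph Ω ar) (γ : G.N → H.N) (n : G.N) : Prop :=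
  ∀ ω : Ω, G.label n = some ω →
    H.label (γ n) = some ω ∧ H.succ (γ n) = (G.succ n).map γ

/-- `γ` is strictly graphic at `n`: either both `n` and `γ n` are unlabeled, or both
are labeled with the same label and corresponding successors.  (When both are
unlabeled both successor strings are empty, so the successor condition is harmless.) -/
def StrictGraphicAt (G H : TermGraph Ω ar) (γ : G.N → H.N) (n : G.N) : Prop :=
  H.label (γ n) = G.label n ∧ H.succ (γ n) = (G.succ n).map γ

def GraphicOn (G H : TermGraph Ω ar) (γ : G.N → H.N) (Γ : Set G.N) : Prop :=
  ∀ n ∈ Γ, GraphicAt G H γ n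

def StrictGraphicOn (G H : TermGraph Ω ar) (γ : G.N → H.N) (Γ : Set G.N) : Prop :=
  ∀ n ∈ Γ, StrictGraphicAt G H γ n

/-- `p ∈ |H|` is a `τ`-clone of `q ∈ |G|` (for `τ : |G| → |H|`): `p` is labeled iff
`q` is labeled, and then they carry the same label and `𝓢_H p = τ*(𝓢_G q)`. -/
def IsClone (G H : TermGraph Ω ar) (τ : G.N → H.N) (p : H.N) (q : G.N) : Prop :=
  H.label p = G.label q ∧ H.succ p = (G.succ q).map τ

end TermGraph

open TermGraph

/-- `(P, τ₁, δ)` is a pushout of `τ : L → R` and `m : L → G` in the category of sets: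
the square commutes and it satisfies the universal property of pushouts. -/
def IsSetPushout {L R G P : Type u} (τ : L → R) (m : L → G)
    (τ₁ : G → P) (δ : R → P) : Prop :=
  τ₁ ∘ m = δ ∘ τ ∧
  ∀ (P' : Type u) (τ₁' : G → P') (δ' : R → P'), τ₁' ∘ m = δ' ∘ τ →
    ∃! η : P → P', η ∘ τ₁ = τ₁' ∧ η ∘ δ = δ'

/-- A rewrite rule `(L, R, τ, σ)`: `τ : |L| → |R|` is a total function and
`σ : |R| ⇀ |L|` is a partial function (encoded via `Option`) such that each node
in the domain of `σ` is unlabeled or is a `τ`-clone of its `σ`-image. -/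
structure Rule (Ω : Type u) (ar : Ω → ℕ) : Type (u + 1) where
  L : TermGraph Ω ar
  R : TermGraph Ω ar
  τ : L.N → R.N
  σ : R.N → Option L.N
  σ_cond : ∀ (n : R.N) (q : L.N), σ n = some q →
    R.label n = none ∨ IsClone L R τ n q

/-- A matching with respect to a rewrite rule `T`: a graph morphism `m : L → G` such
that whenever `m p = m p'` for distinct nodes `p, p'` of `L`, then `τ p` and `τ p'`
are in the domain of `σ` and `σ (τ p) = σ (τ p')`. -/
def IsMatching {Ω : Type u} {ar : Ω → ℕ} (T : Rule Ω ar) (G : TermGraph Ω ar)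
    (m : TermGraph.Hom T.L G) : Prop :=
  ∀ p p' : T.L.N, p ≠ p' → m.toFun p = m.toFun p' →
    (T.σ (T.τ p)).isSome ∧ (T.σ (T.τ p')).isSome ∧ T.σ (T.τ p) = T.σ (T.τ p')

/-- `(H, τ₁, d, σ₁)` is a cloning cone over the rewrite rule `T` and `m : L → G`:
`(G, H, τ₁, σ₁)` is a rewrite rule, `(m, d)` is a morphism of rewrite rules from `T`
to it, `τ₁` is graphic on `|G| − |m(L)|`, and every node in the domain of `σ₁` is a
`τ₁`-clone of its `σ₁`-image. -/
def IsCloningCone {Ω : Type u} {ar : Ω → ℕ} (T : Rule Ω ar) (G : TermGraph Ω ar)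
    (m : TermGraph.Hom T.L G) (H : TermGraph Ω ar) (τ₁ : G.N → H.N)
    (d : TermGraph.Hom T.R H) (σ₁ : H.N → Option G.N) : Prop :=
  d.toFun ∘ T.τ = τ₁ ∘ m.toFun ∧
  (∀ n : T.R.N, (T.σ n).isSome → (σ₁ (d.toFun n)).isSome) ∧
  (∀ (n : T.R.N) (q : T.L.N), T.σ n = some q → σ₁ (d.toFun n) = some (m.toFun q)) ∧
  GraphicOn G H τ₁ ((Set.range m.toFun)ᶜ) ∧
  (∀ (x : H.N) (q : G.N), σ₁ x = some q → IsClone G H τ₁ x q)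

/-- `h` is a morphism of cloning cones from `(H, τ₁, d, σ₁)` to `(H', τ₁', d', σ₁')`:
`|h| ∘ τ₁ = τ₁'`, `h ∘ d = d'`, `h(dom σ₁) ⊆ dom σ₁'` and `σ₁' ∘ |h| = σ₁` on `dom σ₁`. -/
def IsCloningConeMorphism {Ω : Type u} {ar : Ω → ℕ} {G H H' : TermGraph Ω ar}
    {R : TermGraph Ω ar}
    (τ₁ : G.N → H.N) (d : TermGraph.Hom R H) (σ₁ : H.N → Option G.N)
    (τ₁' : G.N → H'.N) (d' : TermGraph.Hom R H') (σ₁' : H'.N → Option G.N)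
    (h : TermGraph.Hom H H') : Prop :=
  h.toFun ∘ τ₁ = τ₁' ∧ h.toFun ∘ d.toFun = d'.toFun ∧
  (∀ x : H.N, (σ₁ x).isSome → (σ₁' (h.toFun x)).isSome) ∧
  (∀ x : H.N, (σ₁ x).isSome → σ₁' (h.toFun x) = σ₁ x)

/-!
The cloning pushout is carried by the pushout of `τ` and `m` in sets, i.e. `|G| ⊔ |R|` modulo
`m p ∼ τ p`. Its structure is forced by the cone axioms: a node coming from `r ∈ R` with
`σ r = q` must be a clone of `m q`, so it takes the label and successors of `m q`; every other
node of `R`, and every node of `G` outside `m(L)`, keeps its own structure. The matching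
condition makes this well defined, since two nodes of `L` identified by `m` have `τ`-images that
either coincide or are clones of the same node. For initiality, the only candidate morphism is
the induced map of sets, and the cone axioms of the target say exactly that it is graphic at
every node and compatible with `σ`.
-/

namespace TermGraph

variable {Ω : Type u} {ar : Ω → ℕ} {G H : TermGraph Ω ar}

def Hom.ofGraphicAt (f : G.N → H.N) (hf : ∀ n, GraphicAt G H f n) : Hom G H :=
  ⟨f, fun n ω h => (hf n ω h).1, fun n ω h => (hf n ω h).2⟩

theorem Hom.ext {f g : Hom G H} (h : f.toFun = g.toFun) : f = g := by
  cases f; cases g; cases h; rfl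

end TermGraph

section SetPushout

variable {L R G : Type u} (τ : L → R) (m : L → G)

def SetPushout.Rel (x y : G ⊕ R) : Prop :=
  ∃ p, x = .inl (m p) ∧ y = .inr (τ p)

def SetPushout : Type u := Quot (SetPushout.Rel τ m)

namespace SetPushout

def inl (g : G) : SetPushout τ m := Quot.mk _ (.inl g)

def inr (r : R) : SetPushout τ m := Quot.mk _ (.inr r)

theorem condition (p : L) : inl τ m (m p) = inr τ m (τ p) :=
  Quot.sound ⟨p, rfl, rfl⟩

variable {τ m} {X : Sort*}

theorem hom_ext {η η' : SetPushout τ m → X} (hl : η ∘ inl τ m = η' ∘ inl τ m)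
    (hr : η ∘ inr τ m = η' ∘ inr τ m) : η = η' := by
  funext x
  induction x using Quot.ind with
  | mk x => cases x with
    | inl g => exact congrFun hl g
    | inr r => exact congrFun hr r

@[elab_as_elim]
theorem ind {motive : SetPushout τ m → Prop} (inr : ∀ r, motive (inr τ m r))
    (inl : ∀ g ∉ Set.range m, motive (inl τ m g)) (x : SetPushout τ m) : motive x := by
  induction x using Quot.ind with
  | mk x => cases x with
    | inr r => exact inr r
    | inl g =>
      by_cases hg : g ∈ Set.range m
      · obtain ⟨p, rfl⟩ := hg
        change motive (SetPushout.inl τ m (m p))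
        rw [condition]
        exact inr (τ p)
      · exact inl g hg

def desc (f : G → X) (f' : R → X) (h : ∀ p, f (m p) = f' (τ p)) : SetPushout τ m → X :=
  Quot.lift (Sum.elim f f') (by rintro _ _ ⟨p, rfl, rfl⟩; exact h p)

@[simp]
theorem desc_inl (f : G → X) (f' : R → X) (h : ∀ p, f (m p) = f' (τ p)) (g : G) :
    desc f f' h (inl τ m g) = f g :=
  rfl

@[simp]
theorem desc_inr (f : G → X) (f' : R → X) (h : ∀ p, f (m p) = f' (τ p)) (r : R) :
    desc f f' h (inr τ m r) = f' r :=
  rfl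

open Classical in
noncomputable def extend (f : G → X) (f' : R → X)
    (h : ∀ p p', m p = m p' → f' (τ p) = f' (τ p')) : SetPushout τ m → X :=
  desc (fun g => if hg : ∃ p, m p = g then f' (τ hg.choose) else f g) f' fun p => by
    have hp : ∃ p', m p' = m p := ⟨p, rfl⟩
    simpa only [dif_pos hp] using h _ _ hp.choose_spec

variable {f : G → X} {f' : R → X} {h : ∀ p p', m p = m p' → f' (τ p) = f' (τ p')}

@[simp]
theorem extend_inr (r : R) : extend f f' h (inr τ m r) = f' r :=
  rfl

theorem extend_inl {g : G} (hg : g ∉ Set.range m) : extend f f' h (inl τ m g) = f g :=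
  dif_neg hg

end SetPushout

end SetPushout

section CloningPushout

open SetPushout

variable {Ω : Type u} {ar : Ω → ℕ} {T : Rule Ω ar} {G : TermGraph Ω ar} {m : Hom T.L G}

theorem IsMatching.sigma_elim_eq (hm : IsMatching T G m) {X : Sort*} (a : T.R.N → X)
    (b : T.L.N → X) {p p' : T.L.N} (h : m.toFun p = m.toFun p') :
    (T.σ (T.τ p)).elim (a (T.τ p)) b = (T.σ (T.τ p')).elim (a (T.τ p')) b := by
  by_cases hpp : p = p'
  · rw [hpp]
  · obtain ⟨hsome, -, hσ⟩ := hm p p' hpp h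
    obtain ⟨q, hq⟩ := Option.isSome_iff_exists.mp hsome
    rw [← hσ, hq]
    rfl

theorem IsCloningCone.isClone {H : TermGraph Ω ar} {τ₁ : G.N → H.N} {d : Hom T.R H}
    {σ₁ : H.N → Option G.N} (hc : IsCloningCone T G m H τ₁ d σ₁) {r : T.R.N} {q : T.L.N}
    (hq : T.σ r = some q) : IsClone G H τ₁ (d.toFun r) (m.toFun q) :=
  hc.2.2.2.2 _ _ (hc.2.2.1 r q hq)

variable (m)

def cloneLabel (r : T.R.N) : Option Ω :=
  (T.σ r).elim (T.R.label r) fun q => G.label (m.toFun q)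

def cloneSucc (r : T.R.N) : List (SetPushout T.τ m.toFun) :=
  (T.σ r).elim ((T.R.succ r).map (inr T.τ m.toFun)) fun q =>
    (G.succ (m.toFun q)).map (inl T.τ m.toFun)

def cloneOrigin (r : T.R.N) : Option G.N :=
  (T.σ r).elim none fun q => some (m.toFun q)

theorem length_cloneSucc (r : T.R.N) :
    (cloneSucc m r).length = ((cloneLabel m r).map ar).getD 0 := by
  cases hσ : T.σ r <;> simp [cloneSucc, cloneLabel, hσ, TermGraph.arity_eq]

variable {m}

theorem IsMatching.cloneLabel_eq (hm : IsMatching T G m) {p p' : T.L.N}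
    (h : m.toFun p = m.toFun p') : cloneLabel m (T.τ p) = cloneLabel m (T.τ p') :=
  hm.sigma_elim_eq T.R.label _ h

theorem IsMatching.cloneSucc_eq (hm : IsMatching T G m) {p p' : T.L.N}
    (h : m.toFun p = m.toFun p') : cloneSucc m (T.τ p) = cloneSucc m (T.τ p') :=
  hm.sigma_elim_eq (fun r => (T.R.succ r).map (inr T.τ m.toFun)) _ h

theorem IsMatching.cloneOrigin_eq (hm : IsMatching T G m) {p p' : T.L.N}
    (h : m.toFun p = m.toFun p') : cloneOrigin m (T.τ p) = cloneOrigin m (T.τ p') :=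
  hm.sigma_elim_eq (fun _ => none) _ h

noncomputable def cloningPushout (hm : IsMatching T G m) : TermGraph Ω ar where
  N := SetPushout T.τ m.toFun
  label := extend G.label (cloneLabel m) fun _ _ => hm.cloneLabel_eq
  succ := extend (fun g => (G.succ g).map (inl T.τ m.toFun)) (cloneSucc m) fun _ _ =>
    hm.cloneSucc_eq
  arity_eq x := by
    induction x using SetPushout.ind with
    | inr r => exact length_cloneSucc m r
    | inl g hg => simp [extend_inl hg, G.arity_eq]

noncomputable def cloningPushoutOrigin (hm : IsMatching T G m) :
    SetPushout T.τ m.toFun → Option G.N :=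
  extend (fun _ => none) (cloneOrigin m) fun _ _ => hm.cloneOrigin_eq

variable (hm : IsMatching T G m)

theorem graphicAt_inr (r : T.R.N) : GraphicAt T.R (cloningPushout hm) (inr T.τ m.toFun) r := by
  intro ω hω
  change cloneLabel m r = some ω ∧ cloneSucc m r = (T.R.succ r).map (inr T.τ m.toFun)
  cases hσ : T.σ r with
  | none => simp [cloneLabel, cloneSucc, hσ, hω]
  | some q =>
    obtain hnone | ⟨hlabel, hsucc⟩ := T.σ_cond r q hσ
    · simp [hω] at hnone
    · have hq : T.L.label q = some ω := hlabel ▸ hω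
      simp [cloneLabel, cloneSucc, hσ, m.label_eq q ω hq, m.succ_eq q ω hq, hsucc,
        Function.comp_def, condition]

noncomputable def cloningPushoutInr : Hom T.R (cloningPushout hm) :=
  Hom.ofGraphicAt _ (graphicAt_inr hm)

theorem isClone_of_cloningPushoutOrigin_eq_some {x : SetPushout T.τ m.toFun} {g : G.N}
    (hx : cloningPushoutOrigin hm x = some g) :
    IsClone G (cloningPushout hm) (inl T.τ m.toFun) x g := by
  induction x using SetPushout.ind with
  | inr r =>
    change cloneOrigin m r = some g at hx
    cases hσ : T.σ r with
    | none => simp [cloneOrigin, hσ] at hx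
    | some q =>
      obtain rfl : m.toFun q = g := by simpa [cloneOrigin, hσ] using hx
      exact ⟨by simp [cloningPushout, cloneLabel, hσ], by simp [cloningPushout, cloneSucc, hσ]⟩
  | inl g' hg' => simp [cloningPushoutOrigin, extend_inl hg'] at hx

theorem isCloningCone_cloningPushout :
    IsCloningCone T G m (cloningPushout hm) (inl T.τ m.toFun) (cloningPushoutInr hm)
      (cloningPushoutOrigin hm) := by
  refine ⟨funext fun p => (condition _ _ p).symm, fun r hr => ?_, fun r q hq => ?_,
    fun g hg ω hω => ?_, fun _ _ => isClone_of_cloningPushoutOrigin_eq_some hm⟩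
  · obtain ⟨q, hq⟩ := Option.isSome_iff_exists.mp hr
    simp [cloningPushoutInr, Hom.ofGraphicAt, cloningPushoutOrigin, cloneOrigin, hq]
  · simp [cloningPushoutInr, Hom.ofGraphicAt, cloningPushoutOrigin, cloneOrigin, hq]
  · simp only [cloningPushout, extend_inl hg] at hω ⊢
    simp [hω]

variable {H : TermGraph Ω ar} {τ₁ : G.N → H.N} {d : Hom T.R H} {σ₁ : H.N → Option G.N}
  (hc : IsCloningCone T G m H τ₁ d σ₁)

def cloningPushoutDesc : SetPushout T.τ m.toFun → H.N :=
  desc τ₁ d.toFun fun p => (congrFun hc.1 p).symm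

theorem graphicAt_cloningPushoutDesc (x : SetPushout T.τ m.toFun) :
    GraphicAt (cloningPushout hm) H (cloningPushoutDesc hc) x := by
  induction x using SetPushout.ind with
  | inr r =>
    intro ω hω
    change cloneLabel m r = some ω at hω
    change H.label (d.toFun r) = some ω ∧ H.succ (d.toFun r) = (cloneSucc m r).map _
    cases hσ : T.σ r with
    | none =>
      simp only [cloneLabel, hσ, Option.elim_none] at hω
      simp [cloneSucc, hσ, d.label_eq r ω hω, d.succ_eq r ω hω, Function.comp_def,
        cloningPushoutDesc]
    | some q =>
      simp only [cloneLabel, hσ, Option.elim_some] at hω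
      obtain ⟨hlabel, hsucc⟩ := hc.isClone hσ
      simp [cloneSucc, hσ, hlabel, hω, hsucc, Function.comp_def, cloningPushoutDesc]
  | inl g hg =>
    intro ω hω
    simp only [cloningPushout, extend_inl hg] at hω ⊢
    obtain ⟨hlabel, hsucc⟩ := hc.2.2.2.1 g hg ω hω
    simp [cloningPushoutDesc, hlabel, hsucc, Function.comp_def]

theorem cloningPushoutDesc_of_origin_eq_some {x : SetPushout T.τ m.toFun} {g : G.N}
    (hx : cloningPushoutOrigin hm x = some g) : σ₁ (cloningPushoutDesc hc x) = some g := by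
  induction x using SetPushout.ind with
  | inr r =>
    change cloneOrigin m r = some g at hx
    cases hσ : T.σ r with
    | none => simp [cloneOrigin, hσ] at hx
    | some q =>
      obtain rfl : m.toFun q = g := by simpa [cloneOrigin, hσ] using hx
      exact hc.2.2.1 r q hσ
  | inl g' hg' => simp [cloningPushoutOrigin, extend_inl hg'] at hx

noncomputable def cloningPushoutDescHom : Hom (cloningPushout hm) H :=
  Hom.ofGraphicAt _ (graphicAt_cloningPushoutDesc hm hc)

theorem isCloningConeMorphism_cloningPushoutDescHom :
    IsCloningConeMorphism (inl T.τ m.toFun) (cloningPushoutInr hm) (cloningPushoutOrigin hm)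
      τ₁ d σ₁ (cloningPushoutDescHom hm hc) := by
  refine ⟨rfl, rfl, fun x hx => ?_, fun x hx => ?_⟩ <;>
  · obtain ⟨g, hg⟩ := Option.isSome_iff_exists.mp hx
    simp [cloningPushoutDescHom, Hom.ofGraphicAt, cloningPushoutDesc_of_origin_eq_some hm hc hg,
      hg]

end CloningPushout

/-- For every rewrite rule `T = (L, R, τ, σ)` and every matching `m : L → G` with
respect to `T`, a cloning pushout of `T` and `m` exists: the category of cloning
cones over `T` and `m` has an initial object. -/
theorem cloning_pushout_exists {Ω : Type u} {ar : Ω → ℕ} (T : Rule Ω ar)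
    (G : TermGraph Ω ar) (m : TermGraph.Hom T.L G) (hm : IsMatching T G m) :
    ∃ (H : TermGraph Ω ar) (τ₁ : G.N → H.N) (d : TermGraph.Hom T.R H)
      (σ₁ : H.N → Option G.N),
      IsCloningCone T G m H τ₁ d σ₁ ∧
      ∀ (H' : TermGraph Ω ar) (τ₁' : G.N → H'.N) (d' : TermGraph.Hom T.R H')
        (σ₁' : H'.N → Option G.N), IsCloningCone T G m H' τ₁' d' σ₁' →
        ∃! h : TermGraph.Hom H H',
          IsCloningConeMorphism τ₁ d σ₁ τ₁' d' σ₁' h := by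
  refine ⟨cloningPushout hm, SetPushout.inl _ _, cloningPushoutInr hm, cloningPushoutOrigin hm,
    isCloningCone_cloningPushout hm, fun H' τ₁' d' σ₁' hc => ?_⟩
  refine ⟨cloningPushoutDescHom hm hc, isCloningConeMorphism_cloningPushoutDescHom hm hc, ?_⟩
  rintro h ⟨hinl, hinr, -, -⟩
  exact Hom.ext (SetPushout.hom_ext hinl hinr)
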